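/- Let a, b ∈ ℝ^{n+1} be such that the segment L_s(a,b) = {(1-λ)a + λb : λ ∈ [0,1]} does not contain 0 and a, b are not collinear. Then the radial projection ψ(p) = p/‖p‖ maps L_s(a,b) bijectively onto the minimizing geodesic G(ψ(a), ψ(b)) on S^n; in particular {p/‖p‖ : p ∈ L_s(a,b)} = G(ψ(a), ψ(b)). -/

import Mathlib

open scoped RealInnerProductSpace Classical

/-- Radial projection onto the unit sphere: `ψ(p) = p / ‖p‖`. -/
noncomputable def radialProj {n : ℕ} (p : EuclideanSpace ℝ (Fin (n + 1))) :
    EuclideanSpace ℝ (Fin (n + 1)) :=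
  ‖p‖⁻¹ • p

/-- The (unique, minimizing) geodesic on `Sⁿ` connecting `u` and `v` (for `u ≠ -v`),
`{(sin((1-λ)θ) u + sin(λθ) v)/sin θ : λ ∈ [0,1]}` with `θ = arccos(uᵀv)`;
for `u = v` it is the singleton `{u}`. -/
noncomputable def sphGeodesic {n : ℕ} (u v : EuclideanSpace ℝ (Fin (n + 1))) :
    Set (EuclideanSpace ℝ (Fin (n + 1))) :=
  if u = v then {u}
  else
    {x | ∃ l ∈ Set.Icc (0 : ℝ) 1,
      x = (Real.sin ((1 - l) * Real.arccos ⟪u, v⟫) / Real.sin (Real.arccos ⟪u, v⟫)) • u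
        + (Real.sin (l * Real.arccos ⟪u, v⟫) / Real.sin (Real.arccos ⟪u, v⟫)) • v}

/-!
The image `ψ(L_s(a,b))` and the geodesic `G(ψ(a), ψ(b))` are both the set `conicArc a b` of
unit vectors in the closed cone spanned by `a` and `b` (equivalently by `ψ(a)` and `ψ(b)`).
For the segment this is immediate, since normalising a nonnegative combination keeps it
nonnegative. For the geodesic it amounts to the fact that
`t ↦ (sin((1-t)θ)/sin θ, sin(tθ)/sin θ)` runs through exactly the nonnegative solutions of
`α² + β² + 2αβ cos θ = 1`, i.e. of `‖α u + β v‖ = 1`, when `0 < θ < π`.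
Injectivity holds because two points of a segment between linearly independent vectors
lying on a common line through `0` coincide.
-/

open Real Set

section Slerp

variable {θ : ℝ}

lemma sin_mul_div_sin_nonneg (hθ : θ ∈ Ioo 0 π) {t : ℝ} (ht : t ∈ Icc (0 : ℝ) 1) :
    0 ≤ sin (t * θ) / sin θ :=
  div_nonneg
    (sin_nonneg_of_nonneg_of_le_pi (mul_nonneg ht.1 hθ.1.le) (by nlinarith [ht.2, hθ.1, hθ.2]))
    (sin_pos_of_pos_of_lt_pi hθ.1 hθ.2).le

lemma slerp_coeffs_quadratic_eq_one (hθ : sin θ ≠ 0) (t : ℝ) :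
    (sin ((1 - t) * θ) / sin θ) ^ 2 + (sin (t * θ) / sin θ) ^ 2
      + 2 * (sin ((1 - t) * θ) / sin θ) * (sin (t * θ) / sin θ) * cos θ = 1 := by
  have hsub : sin ((1 - t) * θ) = sin θ * cos (t * θ) - cos θ * sin (t * θ) := by
    rw [← sin_sub]; ring_nf
  rw [hsub]
  field_simp
  linear_combination sin θ ^ 2 * sin_sq_add_cos_sq (t * θ) - sin (t * θ) ^ 2 * sin_sq_add_cos_sq θ

lemma exists_slerp_coeffs_of_quadratic_eq_one (hθ : θ ∈ Ioo 0 π) {α β : ℝ} (hα : 0 ≤ α)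
    (hβ : 0 ≤ β) (h : α ^ 2 + β ^ 2 + 2 * α * β * cos θ = 1) :
    ∃ t ∈ Icc (0 : ℝ) 1, α = sin ((1 - t) * θ) / sin θ ∧ β = sin (t * θ) / sin θ := by
  have hsin : 0 < sin θ := sin_pos_of_pos_of_lt_pi hθ.1 hθ.2
  have hcircle : (α + β * cos θ) ^ 2 + (β * sin θ) ^ 2 = 1 := by
    linear_combination h + β ^ 2 * sin_sq_add_cos_sq θ
  have hbound : |α + β * cos θ| ≤ 1 :=
    (sq_le_one_iff_abs_le_one _).1 (by nlinarith [sq_nonneg (β * sin θ)])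
  -- `φ` is the angle between `u` and `α u + β v` for unit vectors `u, v` at angle `θ`
  set φ := arccos (α + β * cos θ)
  have hcosφ : cos φ = α + β * cos θ := cos_arccos (abs_le.1 hbound).1 (abs_le.1 hbound).2
  have hsinφ : sin φ = β * sin θ := by
    rw [sin_arccos, show 1 - (α + β * cos θ) ^ 2 = (β * sin θ) ^ 2 by linarith,
      sqrt_sq (by positivity)]
  have hφθ : φ ≤ θ := by
    by_contra! hlt
    have hpos : 0 < sin (φ - θ) :=
      sin_pos_of_pos_of_lt_pi (by linarith) (by linarith [arccos_le_pi (α + β * cos θ), hθ.1])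
    rw [sin_sub, hsinφ, hcosφ] at hpos
    nlinarith [mul_nonneg hα hsin.le]
  refine ⟨φ / θ, ⟨div_nonneg (arccos_nonneg _) hθ.1.le, (div_le_one hθ.1).2 hφθ⟩, ?_, ?_⟩
  · rw [sub_mul, one_mul, div_mul_cancel₀ φ hθ.1.ne', sin_sub, hsinφ, hcosφ]
    field_simp
    ring
  · rw [div_mul_cancel₀ φ hθ.1.ne', hsinφ]
    field_simp

end Slerp

section ConicArc

variable {E : Type*} [NormedAddCommGroup E] [NormedSpace ℝ E]

def conicArc (a b : E) : Set E :=
  {x | ‖x‖ = 1 ∧ ∃ α β : ℝ, 0 ≤ α ∧ 0 ≤ β ∧ α • a + β • b = x}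

lemma conicArc_smul_smul {a b : E} {c d : ℝ} (hc : 0 < c) (hd : 0 < d) :
    conicArc (c • a) (d • b) = conicArc a b := by
  refine ext fun x => and_congr_right fun _ => ⟨?_, ?_⟩
  · rintro ⟨α, β, hα, hβ, rfl⟩
    exact ⟨α * c, β * d, by positivity, by positivity, by simp only [smul_smul]⟩
  · rintro ⟨α, β, hα, hβ, rfl⟩
    exact ⟨α / c, β / d, by positivity, by positivity, by
      rw [smul_smul, smul_smul, div_mul_cancel₀ α hc.ne', div_mul_cancel₀ β hd.ne']⟩

lemma image_inv_norm_smul_segment {a b : E} (h0 : (0 : E) ∉ segment ℝ a b) :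
    (fun p : E => ‖p‖⁻¹ • p) '' segment ℝ a b = conicArc a b := by
  ext x
  constructor
  · rintro ⟨p, hp, rfl⟩
    have hp0 : p ≠ 0 := fun h => h0 (h ▸ hp)
    obtain ⟨s, r, hs, hr, -, rfl⟩ := hp
    exact ⟨norm_smul_inv_norm hp0, ‖s • a + r • b‖⁻¹ * s, ‖s • a + r • b‖⁻¹ * r,
      by positivity, by positivity, by simp only [smul_add, smul_smul]⟩
  · rintro ⟨hx, α, β, hα, hβ, rfl⟩
    have hsum : 0 < α + β := by
      refine (add_nonneg hα hβ).lt_of_ne' fun h => ?_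
      obtain ⟨rfl, rfl⟩ : α = 0 ∧ β = 0 := ⟨by linarith, by linarith⟩
      simp at hx
    refine ⟨(α + β)⁻¹ • (α • a + β • b),
      ⟨α / (α + β), β / (α + β), by positivity, by positivity, by field_simp, by
        simp only [smul_add, smul_smul, div_eq_inv_mul]⟩, ?_⟩
    dsimp only
    rw [norm_smul, hx, mul_one, norm_inv, norm_of_nonneg hsum.le, inv_inv,
      smul_inv_smul₀ hsum.ne']

lemma eq_of_eq_smul_of_mem_segment {a b p q : E} (hab : LinearIndependent ℝ ![a, b])
    (hp : p ∈ segment ℝ a b) (hq : q ∈ segment ℝ a b) {k : ℝ} (hpq : p = k • q) : p = q := by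
  obtain ⟨s, r, -, -, hsr, rfl⟩ := hp
  obtain ⟨s', r', -, -, hsr', rfl⟩ := hq
  obtain ⟨hs, hr⟩ := hab.eq_of_pair (s' := k * s') (t' := k * r')
    (by rw [hpq, smul_add, smul_smul, smul_smul])
  have hk : k = 1 := by linear_combination hsr - k * hsr' - hs - hr
  rw [hs, hr, hk, one_mul, one_mul]

lemma injOn_inv_norm_smul_segment {a b : E} (hab : LinearIndependent ℝ ![a, b]) :
    InjOn (fun p : E => ‖p‖⁻¹ • p) (segment ℝ a b) := by
  intro p hp q hq hpq
  have hrecover : ∀ x : E, ‖x‖ • ‖x‖⁻¹ • x = x := fun x => by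
    rcases eq_or_ne x 0 with rfl | hx
    · simp
    · exact smul_inv_smul₀ (norm_ne_zero_iff.2 hx) x
  refine eq_of_eq_smul_of_mem_segment hab hp hq (k := ‖p‖ * ‖q‖⁻¹) ?_
  calc p = ‖p‖ • ‖p‖⁻¹ • p := (hrecover p).symm
    _ = (‖p‖ * ‖q‖⁻¹) • q := by rw [show ‖p‖⁻¹ • p = ‖q‖⁻¹ • q from hpq, smul_smul]

end ConicArc

section InnerProduct

variable {F : Type*} [NormedAddCommGroup F] [InnerProductSpace ℝ F]

lemma abs_real_inner_div_norm_mul_norm_lt_one_of_linearIndependent {a b : F}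
    (hab : LinearIndependent ℝ ![a, b]) : |⟪a, b⟫ / (‖a‖ * ‖b‖)| < 1 := by
  refine (abs_real_inner_div_norm_mul_norm_le_one a b).lt_of_ne fun h => ?_
  obtain ⟨-, r, -, hr⟩ := (abs_real_inner_div_norm_mul_norm_eq_one_iff a b).1 h
  exact one_ne_zero (hab.eq_zero_of_pair' (s := r) (t := 1) (by rw [hr, one_smul])).2

lemma norm_smul_add_smul_sq {u v : F} (hu : ‖u‖ = 1) (hv : ‖v‖ = 1) (α β : ℝ) :
    ‖α • u + β • v‖ ^ 2 = α ^ 2 + β ^ 2 + 2 * α * β * ⟪u, v⟫ := by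
  rw [norm_add_sq_real, norm_smul, norm_smul, real_inner_smul_left, real_inner_smul_right, hu, hv,
    mul_one, mul_one, norm_eq_abs, norm_eq_abs, sq_abs, sq_abs]
  ring

end InnerProduct

lemma sphGeodesic_eq_conicArc {n : ℕ} {u v : EuclideanSpace ℝ (Fin (n + 1))}
    (hu : ‖u‖ = 1) (hv : ‖v‖ = 1) (huv : |⟪u, v⟫| < 1) : sphGeodesic u v = conicArc u v := by
  obtain ⟨hlo, hhi⟩ := abs_lt.1 huv
  have hθ : arccos ⟪u, v⟫ ∈ Ioo 0 π := ⟨arccos_pos.2 hhi, arccos_lt_pi.2 hlo⟩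
  have hcos : cos (arccos ⟪u, v⟫) = ⟪u, v⟫ := cos_arccos hlo.le hhi.le
  have hne : u ≠ v := by
    rintro rfl
    rw [real_inner_self_eq_norm_sq, hu] at hhi
    norm_num at hhi
  rw [sphGeodesic, if_neg hne]
  ext x
  constructor
  · rintro ⟨t, ht, rfl⟩
    refine ⟨?_, _, _, sin_mul_div_sin_nonneg hθ ⟨by linarith [ht.2], by linarith [ht.1]⟩,
      sin_mul_div_sin_nonneg hθ ht, rfl⟩
    rw [← pow_eq_one_iff_of_nonneg (norm_nonneg _) two_ne_zero, norm_smul_add_smul_sq hu hv]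
    simpa only [hcos] using
      slerp_coeffs_quadratic_eq_one (sin_pos_of_pos_of_lt_pi hθ.1 hθ.2).ne' t
  · rintro ⟨hx, α, β, hα, hβ, rfl⟩
    have hquad := norm_smul_add_smul_sq hu hv α β
    rw [hx, ← hcos] at hquad
    obtain ⟨t, ht, rfl, rfl⟩ := exists_slerp_coeffs_of_quadratic_eq_one hθ hα hβ (by linarith)
    exact ⟨t, ht, rfl⟩

/-- If the segment `L_s(a,b)` does not contain `0` and `a, b` are not collinear,
then the radial projection `ψ(p) = p/‖p‖` maps `L_s(a,b)` bijectively onto the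
minimizing geodesic `G(ψ(a), ψ(b))`; in particular
`{p/‖p‖ : p ∈ L_s(a,b)} = G(ψ(a), ψ(b))`. -/
theorem radial_projection_of_segment_is_geodesic (n : ℕ)
    (a b : EuclideanSpace ℝ (Fin (n + 1)))
    (h0 : (0 : EuclideanSpace ℝ (Fin (n + 1))) ∉ segment ℝ a b)
    (hcol : ∀ q : ℝ, a ≠ q • b) :
    Set.InjOn radialProj (segment ℝ a b) ∧
    radialProj '' segment ℝ a b = sphGeodesic (radialProj a) (radialProj b) := by
  have ha : a ≠ 0 := fun h => h0 (h ▸ left_mem_segment ℝ a b)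
  have hb : b ≠ 0 := fun h => h0 (h ▸ right_mem_segment ℝ a b)
  have hab : LinearIndependent ℝ ![a, b] :=
    LinearIndependent.pair_symm_iff.1 ((LinearIndependent.pair_iff' hb).2 fun q => (hcol q).symm)
  have hu : ‖radialProj a‖ = 1 := norm_smul_inv_norm ha
  have hv : ‖radialProj b‖ = 1 := norm_smul_inv_norm hb
  have hinner : ⟪radialProj a, radialProj b⟫ = ⟪a, b⟫ / (‖a‖ * ‖b‖) := by
    simp only [radialProj, real_inner_smul_left, real_inner_smul_right]
    field_simp
  have huv : |⟪radialProj a, radialProj b⟫| < 1 :=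
    hinner ▸ abs_real_inner_div_norm_mul_norm_lt_one_of_linearIndependent hab
  refine ⟨injOn_inv_norm_smul_segment hab, ?_⟩
  rw [sphGeodesic_eq_conicArc hu hv huv, radialProj, radialProj,
    conicArc_smul_smul (by positivity) (by positivity)]
  exact image_inv_norm_smul_segment h0
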